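/- A subspace Y of a quasi-Polish space X is quasi-Polish (in the subspace topology) if and only if Y is a Π⁰₂ subset of X. -/

import Mathlib

open TopologicalSpace Set Topology

/-- A Π⁰₂ set: a countable intersection of sets of the form (complement of open) ∪ open. -/
def IsPi02 {X : Type*} [TopologicalSpace X] (s : Set X) : Prop :=
  ∃ U V : ℕ → Set X, (∀ n, IsOpen (U n)) ∧ (∀ n, IsOpen (V n)) ∧
    s = ⋂ n, ((U n)ᶜ ∪ V n)

/-- A quasi-Polish space: homeomorphic to a Π⁰₂ subspace of 𝕊^ℕ,
where 𝕊 is the Sierpiński space (`Prop` with its topology in Mathlib). -/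
def QuasiPolish (X : Type*) [TopologicalSpace X] : Prop :=
  ∃ s : Set (ℕ → Prop), IsPi02 s ∧ Nonempty (X ≃ₜ s)

/-!
Fix an embedding `j` of `X` into `𝕊^ℕ` with Π⁰₂ range. A Π⁰₂ subset of `X` is the preimage under
`j` of a Π⁰₂ subset of `𝕊^ℕ`, so `j` embeds it with Π⁰₂ image. Conversely, powers of `𝕊` are
injective spaces: an embedding `e` of `Y` into `𝕊^ℕ` with Π⁰₂ range extends to a continuous `F` on
`X`, and `j` restricted to `Y` extends along `e` to a continuous `G`. Then
`Y = F⁻¹(range e) ∩ {x | G (F x) = j x}`, and equalizers of continuous maps into `𝕊^ℕ` are Π⁰₂.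
-/

section IsPi02

variable {X Z : Type*} [TopologicalSpace X] [TopologicalSpace Z]

theorem isPi02_compl_union {U V : Set X} (hU : IsOpen U) (hV : IsOpen V) : IsPi02 (Uᶜ ∪ V) :=
  ⟨fun _ => U, fun _ => V, fun _ => hU, fun _ => hV, (iInter_const _).symm⟩

theorem isPi02_univ : IsPi02 (univ : Set X) := by
  simpa using isPi02_compl_union (isOpen_empty : IsOpen (∅ : Set X)) isOpen_empty

theorem IsPi02.iInter_nat {s : ℕ → Set X} (hs : ∀ n, IsPi02 (s n)) : IsPi02 (⋂ n, s n) := by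
  choose U V hU hV hs using hs
  refine ⟨fun k => U k.unpair.1 k.unpair.2, fun k => V k.unpair.1 k.unpair.2,
    fun k => hU _ _, fun k => hV _ _, ?_⟩
  rw [iInter_unpair (fun m n => (U m n)ᶜ ∪ V m n)]
  exact iInter_congr hs

theorem IsPi02.iInter {ι : Sort*} [Countable ι] {s : ι → Set X} (hs : ∀ i, IsPi02 (s i)) :
    IsPi02 (⋂ i, s i) := by
  cases isEmpty_or_nonempty ι
  · simpa using isPi02_univ
  · obtain ⟨g, hg⟩ := exists_surjective_nat ι
    rw [← hg.iInter_comp]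
    exact IsPi02.iInter_nat fun n => hs (g n)

theorem IsPi02.inter {s t : Set X} (hs : IsPi02 s) (ht : IsPi02 t) : IsPi02 (s ∩ t) := by
  rw [inter_eq_iInter]
  exact IsPi02.iInter (Bool.forall_bool.2 ⟨ht, hs⟩)

theorem IsPi02.preimage {f : X → Z} (hf : Continuous f) {t : Set Z} (ht : IsPi02 t) :
    IsPi02 (f ⁻¹' t) := by
  obtain ⟨U, V, hU, hV, rfl⟩ := ht
  refine ⟨fun n => f ⁻¹' U n, fun n => f ⁻¹' V n, fun n => (hU n).preimage hf,
    fun n => (hV n).preimage hf, ?_⟩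
  simp only [preimage_iInter, preimage_union, preimage_compl]

theorem Topology.IsInducing.exists_isPi02_preimage_eq {f : X → Z} (hf : IsInducing f)
    {s : Set X} (hs : IsPi02 s) : ∃ t : Set Z, IsPi02 t ∧ f ⁻¹' t = s := by
  obtain ⟨U, V, hU, hV, rfl⟩ := hs
  choose U' hU' hU'U using fun n => hf.isOpen_iff.1 (hU n)
  choose V' hV' hV'V using fun n => hf.isOpen_iff.1 (hV n)
  refine ⟨⋂ n, (U' n)ᶜ ∪ V' n, ⟨U', V', hU', hV', rfl⟩, ?_⟩
  simp only [preimage_iInter, preimage_union, preimage_compl, hU'U, hV'V]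

theorem isPi02_setOf_eq {ι : Type*} [Countable ι] {f g : X → ι → Prop}
    (hf : Continuous f) (hg : Continuous g) : IsPi02 {x | f x = g x} := by
  have hopen : ∀ {h : X → ι → Prop}, Continuous h → ∀ i, IsOpen {x | h x i} := fun hh i =>
    continuous_Prop.1 ((continuous_apply i).comp hh)
  have hset : {x | f x = g x} =
      ⋂ i, ({x | f x i}ᶜ ∪ {x | g x i}) ∩ ({x | g x i}ᶜ ∪ {x | f x i}) := by
    ext x
    simp only [mem_ofPred_eq, mem_iInter, mem_inter_iff, mem_union, mem_compl_iff, funext_iff,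
      propext_iff]
    exact forall_congr' fun i => by tauto
  rw [hset]
  exact IsPi02.iInter fun i => (isPi02_compl_union (hopen hf i) (hopen hg i)).inter
    (isPi02_compl_union (hopen hg i) (hopen hf i))

end IsPi02

theorem Topology.IsInducing.exists_continuous_comp_eq {X Y ι : Type*} [TopologicalSpace X]
    [TopologicalSpace Y] {i : Y → X} (hi : IsInducing i) {f : Y → ι → Prop} (hf : Continuous f) :
    ∃ F : X → ι → Prop, Continuous F ∧ F ∘ i = f := by
  choose S hS hSf using fun n => hi.isOpen_iff.1 (continuous_Prop.1 ((continuous_apply n).comp hf))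
  refine ⟨fun x n => x ∈ S n, continuous_pi fun n => continuous_Prop.2 (hS n), ?_⟩
  funext y n
  exact propext (Set.ext_iff.1 (hSf n) y)

theorem quasiPolish_iff_exists_isEmbedding {X : Type*} [TopologicalSpace X] :
    QuasiPolish X ↔ ∃ j : X → ℕ → Prop, IsEmbedding j ∧ IsPi02 (range j) := by
  constructor
  · rintro ⟨s, hs, ⟨h⟩⟩
    refine ⟨(↑) ∘ h, IsEmbedding.subtypeVal.comp h.isEmbedding, ?_⟩
    rwa [range_comp, h.range_coe, image_univ, Subtype.range_coe]
  · rintro ⟨j, hj, hr⟩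
    exact ⟨range j, hr, ⟨hj.toHomeomorph⟩⟩

theorem QuasiPolish.subtype_of_isPi02 {X : Type*} [TopologicalSpace X] (hX : QuasiPolish X)
    {Y : Set X} (hY : IsPi02 Y) : QuasiPolish Y := by
  obtain ⟨j, hj, hr⟩ := quasiPolish_iff_exists_isEmbedding.1 hX
  obtain ⟨B, hB, rfl⟩ := hj.isInducing.exists_isPi02_preimage_eq hY
  refine quasiPolish_iff_exists_isEmbedding.2 ⟨j ∘ (↑), hj.comp .subtypeVal, ?_⟩
  rw [range_comp, Subtype.range_coe, image_preimage_eq_inter_range]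
  exact hB.inter hr

theorem QuasiPolish.isPi02_of_injective {X : Type*} [TopologicalSpace X] {j : X → ℕ → Prop}
    (hj : Continuous j) (hinj : Function.Injective j) {Y : Set X} (hY : QuasiPolish Y) :
    IsPi02 Y := by
  obtain ⟨e, he, ht⟩ := quasiPolish_iff_exists_isEmbedding.1 hY
  obtain ⟨F, hF, hFe⟩ := IsInducing.subtypeVal.exists_continuous_comp_eq he.continuous
  obtain ⟨G, hG, hGe⟩ := he.isInducing.exists_continuous_comp_eq (hj.comp continuous_subtype_val)
  have hY_eq : Y = F ⁻¹' range e ∩ {x | G (F x) = j x} := by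
    ext x
    constructor
    · intro hx
      have hFx : F x = e ⟨x, hx⟩ := congrFun hFe ⟨x, hx⟩
      exact ⟨⟨_, hFx.symm⟩, show G (F x) = j x by rw [hFx]; exact congrFun hGe ⟨x, hx⟩⟩
    · rintro ⟨⟨y, hy⟩, hGF⟩
      have hjy : j y = j x := by rw [← hGF, ← hy]; exact (congrFun hGe y).symm
      exact hinj hjy ▸ y.2
  rw [hY_eq]
  exact (ht.preimage hF).inter (isPi02_setOf_eq (hG.comp hF) hj)

theorem quasiPolish_subspace_iff_isPi02 {X : Type*} [TopologicalSpace X]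
    (hX : QuasiPolish X) (Y : Set X) : QuasiPolish Y ↔ IsPi02 Y := by
  obtain ⟨j, hj, -⟩ := quasiPolish_iff_exists_isEmbedding.1 hX
  exact ⟨QuasiPolish.isPi02_of_injective hj.continuous hj.injective, hX.subtype_of_isPi02⟩
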